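/- arXiv:2410.03285 — 6 statements merged into one kernel-verified Lean document; each statement's English description precedes it below -/
import Mathlib

section
/- For every (x,j) ∈ ℤ×ℕ, the sequence n ↦ U₁⁻ⁿ U₀ⁿ δ_{x,j} is eventually constant as n → ∞, with eventual value W₊ δ_{x,j}, where W₊ δ_{x,j} = δ_{x,j} if x ≥ -j+1, W₊ δ_{x,j} = δ_{x,j-1} if x ≤ -j and j ≥ 1, and W₊ δ_{x,0} = δ_{x,-x} if x ≤ 0. -/
noncomputable section

abbrev H : Type := lp (fun _ : ℤ × ℕ => ℂ) 2

noncomputable def δ (x : ℤ) (j : ℕ) : H := lp.single 2 (x, j) 1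

private lemma delta_congr {x y : ℤ} {j k : ℕ} (h : x = y) (h' : j = k) :
    δ x j = δ y k := by rw [h, h']

/-- Iterating a unitary that shifts everywhere. -/
private lemma iter_shift_all {U : H ≃ₗᵢ[ℂ] H}
    (h : ∀ (x : ℤ) (j : ℕ), U (δ x j) = δ (x + 1) j) :
    ∀ (n : ℕ) (x : ℤ) (j : ℕ), (⇑U)^[n] (δ x j) = δ (x + n) j := by
  intro n
  induction n with
  | zero => intro x j; simp
  | succ n ih =>
    intro x j
    rw [Function.iterate_succ_apply, h x j, ih (x + 1) j]
    exact delta_congr (by push_cast; ring) rfl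

/-- Iterating U₁ in the safe region: always shifts right. -/
private lemma iter_shift_safe {U₁ : H ≃ₗᵢ[ℂ] H}
    (hU₁a : ∀ (x : ℤ) (j : ℕ), x ≠ -(j : ℤ) - 1 → x ≠ -(j : ℤ) →
      U₁ (δ x j) = δ (x + 1) j) :
    ∀ (n : ℕ) (x : ℤ) (j : ℕ), -(j : ℤ) + 1 ≤ x →
      (⇑U₁)^[n] (δ x j) = δ (x + n) j := by
  intro n
  induction n with
  | zero => intro x j _; simp
  | succ n ih =>
    intro x j hx
    rw [Function.iterate_succ_apply, hU₁a x j (by omega) (by omega),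
      ih (x + 1) j (by omega)]
    exact delta_congr (by push_cast; ring) rfl

/-- Climb lemma: from position ≤ -j-1 at level j, after distance+1 steps reach
    position -j at level j+1. -/
private lemma iter_climb {U₁ : H ≃ₗᵢ[ℂ] H}
    (hU₁a : ∀ (x : ℤ) (j : ℕ), x ≠ -(j : ℤ) - 1 → x ≠ -(j : ℤ) →
      U₁ (δ x j) = δ (x + 1) j)
    (hU₁b : ∀ j : ℕ, U₁ (δ (-(j : ℤ) - 1) j) = δ (-(j : ℤ)) (j + 1)) :
    ∀ (k : ℕ) (x : ℤ) (j : ℕ), x = -(j : ℤ) - 1 - k →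
      (⇑U₁)^[k + 1] (δ x j) = δ (-(j : ℤ)) (j + 1) := by
  intro k
  induction k with
  | zero =>
    intro x j hx
    have : x = -(j : ℤ) - 1 := by omega
    subst this
    simpa using hU₁b j
  | succ k ih =>
    intro x j hx
    have h1 : (⇑U₁)^[k + 1 + 1] (δ x j) = (⇑U₁)^[k + 1] (U₁ (δ x j)) := by
      rw [Function.iterate_succ_apply]
    rw [h1, hU₁a x j (by omega) (by omega)]
    exact ih (x + 1) j (by omega)

/-- Cascade lemma: δ(-m, m) reaches δ(0,0) after m steps. -/
private lemma iter_cascade {U₁ : H ≃ₗᵢ[ℂ] H}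
    (hU₁c : ∀ j : ℕ, 1 ≤ j → U₁ (δ (-(j : ℤ)) j) = δ (-(j : ℤ) + 1) (j - 1)) :
    ∀ (m : ℕ), (⇑U₁)^[m] (δ (-(m : ℤ)) m) = δ 0 0 := by
  intro m
  induction m with
  | zero => simp
  | succ m ih =>
    rw [Function.iterate_succ_apply, hU₁c (m + 1) (by omega)]
    have : δ (-((m : ℤ) + 1) + 1) (m + 1 - 1) = δ (-(m : ℤ)) m := by
      exact delta_congr (by ring) (by omega)
    push_cast at this ⊢
    rw [this, ih]

private lemma symm_iter {U₁ : H ≃ₗᵢ[ℂ] H} (n : ℕ) (v w : H)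
    (h : (⇑U₁)^[n] v = w) : (⇑U₁.symm)^[n] w = v := by
  rw [← h]
  exact (Function.LeftInverse.iterate (fun y => U₁.symm_apply_apply y) n) v

theorem Wplus_eventually_constant (U₀ U₁ : H ≃ₗᵢ[ℂ] H)
    (hU₀ : ∀ (x : ℤ) (j : ℕ), U₀ (δ x j) = δ (x + 1) j)
    (hU₁a : ∀ (x : ℤ) (j : ℕ), x ≠ -(j : ℤ) - 1 → x ≠ -(j : ℤ) →
      U₁ (δ x j) = δ (x + 1) j)
    (hU₁b : ∀ j : ℕ, U₁ (δ (-(j : ℤ) - 1) j) = δ (-(j : ℤ)) (j + 1))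
    (hU₁c : ∀ j : ℕ, 1 ≤ j → U₁ (δ (-(j : ℤ)) j) = δ (-(j : ℤ) + 1) (j - 1))
    (hU₁d : U₁ (δ 0 0) = δ 1 0) :
    ∀ (x : ℤ) (j : ℕ), ∃ N : ℕ, ∀ n ≥ N,
      (⇑U₁.symm)^[n] ((⇑U₀)^[n] (δ x j)) =
        if -(j : ℤ) + 1 ≤ x then δ x j
        else if 1 ≤ j then δ x (j - 1)
        else δ x (-x).toNat := by
  intro x j
  -- first, note U₀ⁿ δ x j = δ (x+n) j
  have h0 : ∀ n : ℕ, (⇑U₀)^[n] (δ x j) = δ (x + n) j := fun n =>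
    iter_shift_all hU₀ n x j
  by_cases h1 : -(j : ℤ) + 1 ≤ x
  · -- safe region: N = 0
    refine ⟨0, fun n _ => ?_⟩
    rw [if_pos h1, h0 n]
    exact symm_iter n _ _ (iter_shift_safe hU₁a n x j h1)
  · rw [if_neg h1]
    by_cases h2 : 1 ≤ j
    · -- x ≤ -j, j ≥ 1 : climb from level j-1
      rw [if_pos h2]
      set k : ℕ := (-(j : ℤ) - x).toNat with hk
      have hkx : (k : ℤ) = -(j : ℤ) - x := by omega
      refine ⟨k + 1, fun n hn => ?_⟩
      rw [h0 n]
      refine symm_iter n _ _ ?_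
      have hsplit : n = (n - (k + 1)) + (k + 1) := by omega
      rw [hsplit, Function.iterate_add_apply]
      have hclimb : (⇑U₁)^[k + 1] (δ x (j - 1)) = δ (-((j - 1 : ℕ) : ℤ)) ((j - 1) + 1) :=
        iter_climb hU₁a hU₁b k x (j - 1) (by push_cast [h2]; omega)
      rw [hclimb]
      have hsafe : (⇑U₁)^[n - (k + 1)] (δ (-((j - 1 : ℕ) : ℤ)) ((j - 1) + 1)) =
          δ (-((j - 1 : ℕ) : ℤ) + (n - (k + 1) : ℕ)) ((j - 1) + 1) :=
        iter_shift_safe hU₁a _ _ _ (by push_cast [h2]; omega)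
      rw [hsafe]
      refine delta_congr ?_ (by omega)
      have : ((n - (k + 1) : ℕ) : ℤ) = n - (k + 1) := by omega
      push_cast [h2, this]
      omega
    · -- j = 0, x ≤ 0 : cascade case
      rw [if_neg h2]
      have hj : j = 0 := by omega
      subst hj
      set m : ℕ := (-x).toNat with hm
      have hmx : x = -(m : ℤ) := by simp only [hm]; omega
      refine ⟨m, fun n hn => ?_⟩
      rw [h0 n]
      refine symm_iter n _ _ ?_
      have hsplit : n = (n - m) + m := by omega
      rw [hsplit, Function.iterate_add_apply, hmx, iter_cascade hU₁c m]
      -- now iterate from δ 0 0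
      rcases Nat.eq_zero_or_pos (n - m) with h | h
      · rw [h]
        exact delta_congr (by omega) rfl
      · obtain ⟨p, hp⟩ : ∃ p, n - m = p + 1 := ⟨n - m - 1, by omega⟩
        rw [hp, Function.iterate_succ_apply, hU₁d,
          iter_shift_safe hU₁a p 1 0 (by omega)]
        exact delta_congr (by omega) rfl
end
end

section
/- For every (x,j) ∈ ℤ×ℕ, the sequence n ↦ U₁ⁿ U₀⁻ⁿ δ_{x,j} (i.e. U₁⁻ⁿ U₀ⁿ with n → -∞) is eventually constant, with eventual value W₋ δ_{x,j}, where W₋ δ_{x,j} = δ_{x,j+1} if x ≥ -j and W₋ δ_{x,j} = δ_{x,j} if x ≤ -j-1. -/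
noncomputable section

theorem Wminus_eventually_constant (U₀ U₁ : H ≃ₗᵢ[ℂ] H)
    (hU₀ : ∀ (x : ℤ) (j : ℕ), U₀ (δ x j) = δ (x + 1) j)
    (hU₁a : ∀ (x : ℤ) (j : ℕ), x ≠ -(j : ℤ) - 1 → x ≠ -(j : ℤ) →
      U₁ (δ x j) = δ (x + 1) j)
    (hU₁b : ∀ j : ℕ, U₁ (δ (-(j : ℤ) - 1) j) = δ (-(j : ℤ)) (j + 1))
    (hU₁c : ∀ j : ℕ, 1 ≤ j → U₁ (δ (-(j : ℤ)) j) = δ (-(j : ℤ) + 1) (j - 1))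
    (hU₁d : U₁ (δ 0 0) = δ 1 0) :
    ∀ (x : ℤ) (j : ℕ), ∃ N : ℕ, ∀ n ≥ N,
      (⇑U₁)^[n] ((⇑U₀.symm)^[n] (δ x j)) =
        if -(j : ℤ) ≤ x then δ x (j + 1) else δ x j := by
  have hsymm : ∀ (x : ℤ) (j : ℕ), U₀.symm (δ x j) = δ (x - 1) j := by
    intro x j
    have h := hU₀ (x - 1) j
    rw [show x - 1 + 1 = x by ring] at h
    rw [← h, LinearIsometryEquiv.symm_apply_apply]
  have h0 : ∀ (n : ℕ) (x : ℤ) (j : ℕ), (⇑U₀.symm)^[n] (δ x j) = δ (x - n) j := by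
    intro n
    induction n with
    | zero => intro x j; simp
    | succ n ih =>
      intro x j
      rw [Function.iterate_succ_apply, hsymm, ih]
      congr 1
      push_cast; ring
  have hA : ∀ (n : ℕ) (y : ℤ) (j : ℕ), y + n ≤ -(j : ℤ) - 1 →
      (⇑U₁)^[n] (δ y j) = δ (y + n) j := by
    intro n
    induction n with
    | zero => intro y j _; simp
    | succ n ih =>
      intro y j h
      rw [Function.iterate_succ_apply, hU₁a y j (by omega) (by omega),
        ih (y + 1) j (by omega)]
      congr 1; push_cast; ring
  have hB : ∀ (n : ℕ) (y : ℤ) (j : ℕ), -(j : ℤ) < y →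
      (⇑U₁)^[n] (δ y j) = δ (y + n) j := by
    intro n
    induction n with
    | zero => intro y j _; simp
    | succ n ih =>
      intro y j h
      rw [Function.iterate_succ_apply, hU₁a y j (by omega) (by omega),
        ih (y + 1) j (by omega)]
      congr 1; push_cast; ring
  intro x j
  by_cases hx : -(j : ℤ) ≤ x
  · set a : ℕ := (x + j).toNat with ha_def
    have ha : (a : ℤ) = x + j := Int.toNat_of_nonneg (by omega)
    refine ⟨a + 1, fun n hn => ?_⟩
    obtain ⟨k, hk⟩ : ∃ k, n = a + (1 + k) := ⟨n - (a + 1), by omega⟩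
    subst hk
    rw [if_pos hx, h0, Function.iterate_add_apply, Function.iterate_add_apply,
      Function.iterate_one,
      hA k _ j (by push_cast; omega),
      show x - ((a + (1 + k) : ℕ) : ℤ) + (k : ℤ) = -(j : ℤ) - 1 by push_cast; omega,
      hU₁b j, hB a _ (j + 1) (by push_cast; omega),
      show -(j : ℤ) + (a : ℤ) = x by omega]
  · refine ⟨0, fun n _ => ?_⟩
    rw [if_neg hx, h0, hA n _ j (by omega)]
    congr 1; ring
end
end

section
/- The scattering operator S(U₁,U₀) := W₊(U₁,U₀)* ∘ W₋(U₁,U₀) satisfies S δ_{x,j} = δ_{x,j+1} for all (x,j) ∈ ℤ×ℕ; consequently S is an isometry which is not unitary, and the orthogonal complement of its range equals span{δ_{x,0} : x ∈ ℤ}. -/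
noncomputable section

/-- The scattering operator S(U₁,U₀) = W₊* ∘ W₋. -/
noncomputable def scatOp (Wp : H ≃ₗᵢ[ℂ] H) (Wm : H →ₗᵢ[ℂ] H) : H →L[ℂ] H :=
  (ContinuousLinearMap.adjoint Wp.toLinearIsometry.toContinuousLinearMap).comp
    Wm.toContinuousLinearMap

local notation "⟪" x ", " y "⟫" => @inner ℂ _ _ x y

lemma adjoint_isoiso (Wp : H ≃ₗᵢ[ℂ] H) :
    ContinuousLinearMap.adjoint Wp.toLinearIsometry.toContinuousLinearMap =
      Wp.symm.toLinearIsometry.toContinuousLinearMap := by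
  rw [eq_comm, ContinuousLinearMap.eq_adjoint_iff]
  intro x y
  have := Wp.inner_map_map (Wp.symm x) y
  simpa using this.symm

lemma scatOp_apply (Wp : H ≃ₗᵢ[ℂ] H) (Wm : H →ₗᵢ[ℂ] H) (f : H) :
    scatOp Wp Wm f = Wp.symm (Wm f) := by
  simp [scatOp, adjoint_isoiso]

lemma coord_eq (p : ℤ × ℕ) (g : H) : ⟪δ p.1 p.2, g⟫ = g p := by
  have := lp.inner_single_left (𝕜 := ℂ) (G := fun _ : ℤ × ℕ => ℂ) p (1 : ℂ) g
  simpa [δ] using this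

theorem scattering_operator_initial_model (Wp : H ≃ₗᵢ[ℂ] H) (Wm : H →ₗᵢ[ℂ] H)
    (hWpa : ∀ (x : ℤ) (j : ℕ), -(j : ℤ) + 1 ≤ x → Wp (δ x j) = δ x j)
    (hWpb : ∀ (x : ℤ) (j : ℕ), 1 ≤ j → x ≤ -(j : ℤ) → Wp (δ x j) = δ x (j - 1))
    (hWpc : ∀ x : ℤ, x ≤ 0 → Wp (δ x 0) = δ x (-x).toNat)
    (hWma : ∀ (x : ℤ) (j : ℕ), -(j : ℤ) ≤ x → Wm (δ x j) = δ x (j + 1))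
    (hWmb : ∀ (x : ℤ) (j : ℕ), x ≤ -(j : ℤ) - 1 → Wm (δ x j) = δ x j) :
    (∀ (x : ℤ) (j : ℕ), scatOp Wp Wm (δ x j) = δ x (j + 1)) ∧
    (∀ f : H, ‖scatOp Wp Wm f‖ = ‖f‖) ∧
    ¬ Function.Surjective ⇑(scatOp Wp Wm) ∧
    (LinearMap.range (scatOp Wp Wm).toLinearMap)ᗮ =
      (Submodule.span ℂ (Set.range fun x : ℤ => δ x 0)).topologicalClosure := by
  set S := scatOp Wp Wm with hSdef
  -- Part 1
  have hS : ∀ (x : ℤ) (j : ℕ), S (δ x j) = δ x (j + 1) := by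
    intro x j
    rw [hSdef, scatOp_apply]
    have key : Wm (δ x j) = Wp (δ x (j + 1)) := by
      rcases le_or_gt (-(j : ℤ)) x with h | h
      · rw [hWma x j h, hWpa x (j + 1) (by push_cast; omega)]
      · rw [hWmb x j (by omega), hWpb x (j + 1) (by omega) (by push_cast; omega)]
        simp
    rw [key, Wp.symm_apply_apply]
  -- Part 2
  have hnorm : ∀ f : H, ‖S f‖ = ‖f‖ := by
    intro f
    rw [hSdef, scatOp_apply, Wp.symm.norm_map, Wm.norm_map]
  -- orthogonal complement characterization
  have hK1 : ∀ g : H, g ∈ (LinearMap.range S.toLinearMap)ᗮ ↔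
      ∀ p : ℤ × ℕ, p.2 ≠ 0 → g p = 0 := by
    intro g
    constructor
    · intro hg p hp
      obtain ⟨px, pj⟩ := p
      obtain ⟨k, rfl⟩ := Nat.exists_eq_succ_of_ne_zero hp
      have h := hg (S (δ px k)) ⟨δ px k, rfl⟩
      rw [hS px k] at h
      rw [← coord_eq (px, k + 1) g]
      exact h
    · intro hg
      have hadj : ContinuousLinearMap.adjoint S g = 0 := by
        apply lp.ext
        funext p
        have h1 : (ContinuousLinearMap.adjoint S g : ∀ _ : ℤ × ℕ, ℂ) p
            = ⟪δ p.1 p.2, ContinuousLinearMap.adjoint S g⟫ := (coord_eq p _).symm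
        rw [h1, ContinuousLinearMap.adjoint_inner_right, hS p.1 p.2,
          coord_eq (p.1, p.2 + 1) g, hg (p.1, p.2 + 1) (Nat.succ_ne_zero _)]
        rfl
      intro u hu
      obtain ⟨f, rfl⟩ := hu
      have h2 : ⟪S f, g⟫ = ⟪f, ContinuousLinearMap.adjoint S g⟫ :=
        (ContinuousLinearMap.adjoint_inner_right S f g).symm
      rw [hadj, inner_zero_right] at h2
      exact h2
  have hδmem : ∀ x : ℤ, δ x 0 ∈ (LinearMap.range S.toLinearMap)ᗮ := by
    intro x
    rw [hK1]
    intro p hp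
    exact lp.single_apply_ne (E := fun _ : ℤ × ℕ => ℂ) 2 (x, 0) (1 : ℂ)
      (fun h => hp (by rw [h]))
  -- Part 4
  have hperp : (LinearMap.range S.toLinearMap)ᗮ =
      (Submodule.span ℂ (Set.range fun x : ℤ => δ x 0)).topologicalClosure := by
    apply le_antisymm
    · intro g hg
      rw [hK1] at hg
      have hsum : HasSum (fun p : ℤ × ℕ => lp.single 2 p (g p)) g :=
        lp.hasSum_single ENNReal.ofNat_ne_top g
      have hmem : ∀ s : Finset (ℤ × ℕ),
          (∑ p ∈ s, lp.single 2 p (g p)) ∈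
            (Submodule.span ℂ (Set.range fun x : ℤ => δ x 0) : Submodule ℂ H) := by
        intro s
        apply Submodule.sum_mem
        intro p _
        obtain ⟨px, pj⟩ := p
        by_cases hp : pj = 0
        · subst hp
          have hδ : δ px 0 = lp.single (E := fun _ : ℤ × ℕ => ℂ) 2 (px, 0) (1 : ℂ) := rfl
          have : lp.single 2 (px, 0) (g (px, 0)) = g (px, 0) • δ px 0 := by
            rw [hδ, ← lp.single_smul]
            simp
          rw [this]
          exact Submodule.smul_mem _ _ (Submodule.subset_span ⟨px, rfl⟩)
        · rw [hg (px, pj) hp]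
          have : lp.single 2 (px, pj) (0 : ℂ) = (0 : H) := by
            have h0 := lp.single_smul (E := fun _ : ℤ × ℕ => ℂ) 2 (px, pj) (1 : ℂ) (0 : ℂ)
            simpa using h0
          rw [this]
          exact Submodule.zero_mem _
      exact mem_closure_of_tendsto hsum (Filter.Eventually.of_forall hmem)
    · apply Submodule.topologicalClosure_minimal
      · rw [Submodule.span_le]
        rintro _ ⟨x, rfl⟩
        exact hδmem x
      · exact Submodule.isClosed_orthogonal _
  refine ⟨hS, hnorm, ?_, hperp⟩
  -- not surjective
  intro hsurj
  obtain ⟨f, hf⟩ := hsurj (δ 0 0)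
  have h0 : ⟪δ 0 0, δ 0 0⟫ = 0 := by
    have := hδmem 0 (S f) ⟨f, rfl⟩
    rwa [hf] at this
  rw [inner_self_eq_zero] at h0
  have h1 : (δ 0 0 : ∀ _ : ℤ × ℕ, ℂ) (0, 0) = 1 := lp.single_apply_self 2 ((0 : ℤ), (0 : ℕ)) 1
  rw [h0] at h1
  simp at h1
end
end

section
/- The wave operator W₊(U₁,U₀) satisfies the intertwining relation W₊ U₀ = U₁ W₊, where the operators act on ℓ²(ℤ×ℕ). -/
noncomputable section

theorem Wplus_intertwining (U₀ U₁ : H ≃ₗᵢ[ℂ] H) (W : H ≃ₗᵢ[ℂ] H)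
    (hU₀ : ∀ (x : ℤ) (j : ℕ), U₀ (δ x j) = δ (x + 1) j)
    (hU₁a : ∀ (x : ℤ) (j : ℕ), x ≠ -(j : ℤ) - 1 → x ≠ -(j : ℤ) →
      U₁ (δ x j) = δ (x + 1) j)
    (hU₁b : ∀ j : ℕ, U₁ (δ (-(j : ℤ) - 1) j) = δ (-(j : ℤ)) (j + 1))
    (hU₁c : ∀ j : ℕ, 1 ≤ j → U₁ (δ (-(j : ℤ)) j) = δ (-(j : ℤ) + 1) (j - 1))
    (hU₁d : U₁ (δ 0 0) = δ 1 0)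
    (hWa : ∀ (x : ℤ) (j : ℕ), -(j : ℤ) + 1 ≤ x → W (δ x j) = δ x j)
    (hWb : ∀ (x : ℤ) (j : ℕ), 1 ≤ j → x ≤ -(j : ℤ) → W (δ x j) = δ x (j - 1))
    (hWc : ∀ x : ℤ, x ≤ 0 → W (δ x 0) = δ x (-x).toNat) :
    ∀ f : H, W (U₀ f) = U₁ (W f) := by
  have key : ∀ (x : ℤ) (j : ℕ), W (U₀ (δ x j)) = U₁ (W (δ x j)) := by
    intro x j
    rw [hU₀]
    rcases le_or_gt (-(j : ℤ) + 1) x with hx | hx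
    · -- case x ≥ -j+1
      rw [hWa x j hx, hWa (x + 1) j (by omega), hU₁a x j (by omega) (by omega)]
    · -- x ≤ -j
      have hxle : x ≤ -(j : ℤ) := by omega
      rcases Nat.eq_zero_or_pos j with hj | hj
      · subst hj
        have hx0 : x ≤ 0 := by omega
        rw [hWc x hx0]
        rcases eq_or_lt_of_le hx0 with h0 | h0
        · subst h0
          rw [hWa (0 + 1) 0 (by omega)]
          simpa using hU₁d.symm
        · -- x ≤ -1
          have hx1 : x + 1 ≤ 0 := by omega
          rw [hWc (x + 1) hx1]
          set j' : ℕ := (-x).toNat with hj'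
          have hxj : x = -(j' : ℤ) := by omega
          have hj1 : 1 ≤ j' := by omega
          have := hU₁c j' hj1
          rw [← hxj] at this
          rw [this]
          congr 1
          omega
      · -- j ≥ 1
        rw [hWb x j hj hxle]
        rcases eq_or_lt_of_le hxle with h0 | h0
        · -- x = -j
          subst h0
          rw [hWa (-(j : ℤ) + 1) j (by omega)]
          have hb := hU₁b (j - 1)
          have e1 : (-(((j : ℕ) - 1 : ℕ) : ℤ) - 1) = -(j : ℤ) := by omega
          have e2 : (-(((j : ℕ) - 1 : ℕ) : ℤ)) = -(j : ℤ) + 1 := by omega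
          rw [e1, e2] at hb
          rw [hb]
          congr 1
          omega
        · -- x ≤ -j-1
          have hxle1 : x + 1 ≤ -(j : ℤ) := by omega
          rw [hWb (x + 1) j hj hxle1]
          rw [hU₁a x (j - 1) (by omega) (by omega)]
    -- done key
  intro f
  set T₁ : H →L[ℂ] H :=
    (W.toLinearIsometry.toContinuousLinearMap).comp
      (U₀.toLinearIsometry.toContinuousLinearMap) with hT₁
  set T₂ : H →L[ℂ] H :=
    (U₁.toLinearIsometry.toContinuousLinearMap).comp
      (W.toLinearIsometry.toContinuousLinearMap) with hT₂
  have hs : HasSum (fun i : ℤ × ℕ => lp.single 2 i (f i : ℂ)) f :=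
    lp.hasSum_single (by norm_num) f
  have h1 : HasSum (fun i : ℤ × ℕ => T₁ (lp.single 2 i (f i : ℂ))) (T₁ f) := hs.mapL T₁
  have h2 : HasSum (fun i : ℤ × ℕ => T₂ (lp.single 2 i (f i : ℂ))) (T₂ f) := hs.mapL T₂
  have hpt : ∀ i : ℤ × ℕ, T₁ (lp.single 2 i (f i : ℂ)) = T₂ (lp.single 2 i (f i : ℂ)) := by
    intro i
    have : lp.single 2 i (f i : ℂ) = (f i : ℂ) • δ i.1 i.2 := by
      rw [δ, ← lp.single_smul]
      simp
    rw [this, map_smul, map_smul]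
    congr 1
    simpa [hT₁, hT₂] using key i.1 i.2
  rw [funext hpt] at h1
  have : T₁ f = T₂ f := h1.unique h2
  simpa [hT₁, hT₂] using this
end
end

section
/- The operators U₁ (initial model) and U₂ (perturbed model 1) differ by an operator of rank at most 4: U₂ - U₁ = -|δ_{z,ℓ}⟩⟨δ_{z-1,ℓ}| - |δ_{z+1,ℓ}⟩⟨δ_{z,ℓ}| + |δ_{z+1,ℓ}⟩⟨δ_{z-1,ℓ}| + |δ_{z,ℓ}⟩⟨δ_{z,ℓ}|, and U₂ is unitary with U₂ δ_{z,ℓ} = δ_{z,ℓ}. -/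
noncomputable section

/-! Let `R` be the reflection in `(δ_{z-1,ℓ} - δ_{z,ℓ})ᗮ`, which swaps the orthonormal vectors
`δ_{z-1,ℓ}` and `δ_{z,ℓ}`, and take `U₂ = U₁ ∘ R`. Since `z ≥ -ℓ + 2`, neither vector lies on
the anti-diagonal, so `U₁` shifts them to `δ_{z,ℓ}` and `δ_{z+1,ℓ}`; this gives the formula for
`U₂` and `U₂ δ_{z,ℓ} = U₁ δ_{z-1,ℓ} = δ_{z,ℓ}`. Moreover `U₂ - U₁ = U₁ ∘ (R - 1)` and `R - 1`
has range in the line spanned by `δ_{z-1,ℓ} - δ_{z,ℓ}`, so the rank is at most `1`. -/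

open scoped InnerProductSpace

open Submodule

section Reflection

variable {𝕜 E : Type*} [RCLike 𝕜] [NormedAddCommGroup E] [InnerProductSpace 𝕜 E]

theorem rank_reflection_orthogonal_sub_id_le (K : Submodule 𝕜 E) [K.HasOrthogonalProjection] :
    LinearMap.rank ((reflection Kᗮ).toLinearEquiv.toLinearMap - LinearMap.id) ≤
      Module.rank 𝕜 K := by
  refine Submodule.rank_mono ?_
  rintro _ ⟨f, rfl⟩
  have : reflection Kᗮ f - f = -(2 : 𝕜) • K.starProjection f := by
    rw [reflection_orthogonal_apply, reflection_apply]
    module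
  simp [this, K.smul_mem _ (K.starProjection_apply_mem f)]

variable {a b : E}

theorem reflection_orthogonal_span_sub_apply (ha : ‖a‖ = 1) (hb : ‖b‖ = 1) (hab : ⟪a, b⟫_𝕜 = 0)
    (f : E) : reflection (𝕜 ∙ (a - b))ᗮ f = f - ⟪a - b, f⟫_𝕜 • (a - b) := by
  have hnorm : ‖a - b‖ ^ 2 = 2 := by
    rw [@norm_sub_sq 𝕜, ha, hb, hab]
    norm_num
  rw [reflection_orthogonal_apply, reflection_singleton_apply, ← RCLike.ofReal_pow, hnorm]
  module

theorem reflection_orthogonal_span_sub_apply_right (ha : ‖a‖ = 1) (hb : ‖b‖ = 1)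
    (hab : ⟪a, b⟫_𝕜 = 0) : reflection (𝕜 ∙ (a - b))ᗮ b = a := by
  rw [reflection_orthogonal_span_sub_apply ha hb hab, inner_sub_left, hab,
    inner_self_eq_norm_sq_to_K, hb]
  module

theorem rank_trans_sub_le (S U : E ≃ₗᵢ[𝕜] E) :
    LinearMap.rank ((S.trans U).toLinearEquiv.toLinearMap - U.toLinearEquiv.toLinearMap) ≤
      LinearMap.rank (S.toLinearEquiv.toLinearMap - LinearMap.id) := by
  have : (S.trans U).toLinearEquiv.toLinearMap - U.toLinearEquiv.toLinearMap =
      U.toLinearEquiv.toLinearMap ∘ₗ (S.toLinearEquiv.toLinearMap - LinearMap.id) := by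
    ext f
    simp
  rw [this]
  exact LinearMap.rank_comp_le_right _ _

end Reflection

theorem norm_δ (x : ℤ) (j : ℕ) : ‖δ x j‖ = 1 := by
  simp [δ, lp.norm_single]

theorem inner_δ_δ_of_ne {x y : ℤ} {j k : ℕ} (h : (x, j) ≠ (y, k)) : ⟪δ x j, δ y k⟫_ℂ = 0 := by
  classical
  rw [δ, δ, lp.inner_single_left, lp.single_apply_ne _ _ _ h]
  simp

theorem inner_δ_sub_one (z : ℤ) (j : ℕ) : ⟪δ (z - 1) j, δ z j⟫_ℂ = 0 :=
  inner_δ_δ_of_ne (by simp)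

theorem perturbed_model_1_exists_general (ℓ : ℕ) (z : ℤ) (hz : -(ℓ : ℤ) + 2 ≤ z)
    (U₁ : H ≃ₗᵢ[ℂ] H)
    (hU₁a : ∀ (x : ℤ) (j : ℕ), x ≠ -(j : ℤ) - 1 → x ≠ -(j : ℤ) →
      U₁ (δ x j) = δ (x + 1) j) :
    ∃ U₂ : H ≃ₗᵢ[ℂ] H,
      (∀ f : H, U₂ f = U₁ f
        - (inner ℂ (δ (z - 1) ℓ) f : ℂ) • δ z ℓ
        - (inner ℂ (δ z ℓ) f : ℂ) • δ (z + 1) ℓ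
        + (inner ℂ (δ (z - 1) ℓ) f : ℂ) • δ (z + 1) ℓ
        + (inner ℂ (δ z ℓ) f : ℂ) • δ z ℓ) ∧
      LinearMap.rank (U₂.toLinearEquiv.toLinearMap - U₁.toLinearEquiv.toLinearMap) ≤ 4 ∧
      U₂ (δ z ℓ) = δ z ℓ := by
  have hUa : U₁ (δ (z - 1) ℓ) = δ z ℓ := by
    rw [hU₁a _ _ (by omega) (by omega), sub_add_cancel]
  have hUb : U₁ (δ z ℓ) = δ (z + 1) ℓ := hU₁a _ _ (by omega) (by omega)
  have hR := reflection_orthogonal_span_sub_apply (norm_δ (z - 1) ℓ) (norm_δ z ℓ)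
    (inner_δ_sub_one z ℓ)
  refine ⟨(reflection (ℂ ∙ (δ (z - 1) ℓ - δ z ℓ))ᗮ).trans U₁, fun f => ?_, ?_, ?_⟩
  · rw [LinearIsometryEquiv.trans_apply, hR, map_sub, map_smul, map_sub, hUa, hUb, inner_sub_left]
    module
  · calc _ ≤ _ := rank_trans_sub_le _ _
      _ ≤ _ := rank_reflection_orthogonal_sub_id_le _
      _ ≤ 1 := (rank_span_le _).trans (by simp)
      _ ≤ 4 := by norm_num
  · rw [LinearIsometryEquiv.trans_apply, reflection_orthogonal_span_sub_apply_right (norm_δ _ _)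
      (norm_δ _ _) (inner_δ_sub_one z ℓ), hUa]

theorem perturbed_model_1_exists (ℓ : ℕ) (hℓ : 1 ≤ ℓ) (z : ℤ) (hz : -(ℓ : ℤ) + 2 ≤ z)
    (U₁ : H ≃ₗᵢ[ℂ] H)
    (hU₁a : ∀ (x : ℤ) (j : ℕ), x ≠ -(j : ℤ) - 1 → x ≠ -(j : ℤ) →
      U₁ (δ x j) = δ (x + 1) j)
    (hU₁b : ∀ j : ℕ, U₁ (δ (-(j : ℤ) - 1) j) = δ (-(j : ℤ)) (j + 1))
    (hU₁c : ∀ j : ℕ, 1 ≤ j → U₁ (δ (-(j : ℤ)) j) = δ (-(j : ℤ) + 1) (j - 1))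
    (hU₁d : U₁ (δ 0 0) = δ 1 0) :
    ∃ U₂ : H ≃ₗᵢ[ℂ] H,
      (∀ f : H, U₂ f = U₁ f
        - (inner ℂ (δ (z - 1) ℓ) f : ℂ) • δ z ℓ
        - (inner ℂ (δ z ℓ) f : ℂ) • δ (z + 1) ℓ
        + (inner ℂ (δ (z - 1) ℓ) f : ℂ) • δ (z + 1) ℓ
        + (inner ℂ (δ z ℓ) f : ℂ) • δ z ℓ) ∧
      LinearMap.rank (U₂.toLinearEquiv.toLinearMap - U₁.toLinearEquiv.toLinearMap) ≤ 4 ∧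
      U₂ (δ z ℓ) = δ z ℓ :=
  perturbed_model_1_exists_general ℓ z hz U₁ hU₁a
end
end

section
/- For the perturbed model 2, the unitary U₃ := U₁ - |δ_{-ℓ,ℓ}⟩⟨δ_{-ℓ-1,ℓ+1}| - |δ_{-ℓ+1,ℓ-1}⟩⟨δ_{-ℓ,ℓ}| + |δ_{-ℓ+1,ℓ-1}⟩⟨δ_{-ℓ-1,ℓ+1}| + |δ_{-ℓ,ℓ}⟩⟨δ_{-ℓ,ℓ}| satisfies U₃ δ_{-ℓ,ℓ} = δ_{-ℓ,ℓ}, and the scattering operator S(U₃,U₀) := W₊(U₃,U₀)* W₋(U₃,U₀) equals S(U₁,U₀), i.e. S(U₃,U₀) δ_{x,j} = δ_{x,j+1} for all (x,j), even though U₃ ≠ U₁. -/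
/-!
`U₃` differs from `U₁` only on `δ_{-ℓ-1,ℓ+1}` and `δ_{-ℓ,ℓ}`: it sends the first to `δ_{-ℓ+1,ℓ-1}` and
fixes the second, whereas `U₁` sends them to `δ_{-ℓ,ℓ}` and `δ_{-ℓ+1,ℓ-1}`. For the scattering
operator, the formulas for the wave operators give `W₋ δ_{x,j} = W₊ δ_{x,j+1}` for every `(x, j)`
(both equal `δ_{x,j}` when `x ≤ -j-1` and `δ_{x,j+1}` otherwise), and `W₊* W₊ = 1` because `W₊`
is an isometry.
-/

noncomputable section

theorem LinearIsometry.adjoint_apply_map {𝕜 E F : Type*} [RCLike 𝕜]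
    [NormedAddCommGroup E] [InnerProductSpace 𝕜 E] [CompleteSpace E]
    [NormedAddCommGroup F] [InnerProductSpace 𝕜 F] [CompleteSpace F]
    (W : E →ₗᵢ[𝕜] F) (x : E) :
    ContinuousLinearMap.adjoint W.toContinuousLinearMap (W x) = x :=
  ext_inner_left 𝕜 fun v => by
    rw [ContinuousLinearMap.adjoint_inner_right]
    exact W.inner_map_map v x

theorem inner_δ_δ (x y : ℤ) (j k : ℕ) :
    inner ℂ (δ x j) (δ y k) = if (x, j) = (y, k) then 1 else 0 := by
  rw [δ, δ, lp.inner_single_left, lp.single_apply]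
  split_ifs <;> simp_all

theorem δ_ne_δ {x y : ℤ} {j k : ℕ} (h : (x, j) ≠ (y, k)) : δ x j ≠ δ y k := fun he => by
  have h1 := inner_δ_δ x y j k
  rw [← he, inner_δ_δ, if_pos rfl, if_neg h] at h1
  exact one_ne_zero h1

theorem map_δ_eq_map_δ_succ {Wp Wm : H → H}
    (hWpa : ∀ (x : ℤ) (j : ℕ), -(j : ℤ) + 1 ≤ x → Wp (δ x j) = δ x j)
    (hWpb : ∀ (x : ℤ) (j : ℕ), 1 ≤ j → x ≤ -(j : ℤ) → Wp (δ x j) = δ x (j - 1))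
    (hWma : ∀ (x : ℤ) (j : ℕ), x ≤ -(j : ℤ) - 1 → Wm (δ x j) = δ x j)
    (hWmb : ∀ (x : ℤ) (j : ℕ), -(j : ℤ) ≤ x → Wm (δ x j) = δ x (j + 1)) (x : ℤ) (j : ℕ) :
    Wm (δ x j) = Wp (δ x (j + 1)) := by
  rcases le_or_gt x (-(j : ℤ) - 1) with hx | hx
  · rw [hWma x j hx, hWpb x (j + 1) (by omega) (by push_cast; omega), Nat.add_sub_cancel]
  · rw [hWmb x j (by omega), hWpa x (j + 1) (by push_cast; omega)]

theorem perturbed_model_2_same_scattering_general (ℓ : ℕ) (hℓ : 1 ≤ ℓ)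
    (U₁ U₃ : H ≃ₗᵢ[ℂ] H) (Wp Wm : H →ₗᵢ[ℂ] H)
    (hU₁c : ∀ j : ℕ, 1 ≤ j → U₁ (δ (-(j : ℤ)) j) = δ (-(j : ℤ) + 1) (j - 1))
    (hU₃ : ∀ f : H, U₃ f = U₁ f
      - (inner ℂ (δ (-(ℓ : ℤ) - 1) (ℓ + 1)) f : ℂ) • δ (-(ℓ : ℤ)) ℓ
      - (inner ℂ (δ (-(ℓ : ℤ)) ℓ) f : ℂ) • δ (-(ℓ : ℤ) + 1) (ℓ - 1)
      + (inner ℂ (δ (-(ℓ : ℤ) - 1) (ℓ + 1)) f : ℂ) • δ (-(ℓ : ℤ) + 1) (ℓ - 1)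
      + (inner ℂ (δ (-(ℓ : ℤ)) ℓ) f : ℂ) • δ (-(ℓ : ℤ)) ℓ)
    -- W₊(U₃,U₀):
    (hWpa : ∀ (x : ℤ) (j : ℕ), -(j : ℤ) + 1 ≤ x → Wp (δ x j) = δ x j)
    (hWpb : ∀ (x : ℤ) (j : ℕ), 1 ≤ j → x ≤ -(j : ℤ) → Wp (δ x j) = δ x (j - 1))
    -- W₋(U₃,U₀):
    (hWma : ∀ (x : ℤ) (j : ℕ), x ≤ -(j : ℤ) - 1 → Wm (δ x j) = δ x j)
    (hWmb : ∀ (x : ℤ) (j : ℕ), -(j : ℤ) ≤ x → Wm (δ x j) = δ x (j + 1)) :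
    U₃ (δ (-(ℓ : ℤ)) ℓ) = δ (-(ℓ : ℤ)) ℓ ∧
    (∀ (x : ℤ) (j : ℕ),
      ContinuousLinearMap.adjoint Wp.toContinuousLinearMap (Wm (δ x j)) = δ x (j + 1)) ∧
    U₃ ≠ U₁ := by
  have hU₁_prev : U₁ (δ (-(ℓ : ℤ) - 1) (ℓ + 1)) = δ (-(ℓ : ℤ)) ℓ := by
    simpa only [Nat.cast_succ, neg_add', sub_add_cancel, Nat.add_sub_cancel] using
      hU₁c (ℓ + 1) (Nat.le_add_left 1 ℓ)
  have hU₃_prev : U₃ (δ (-(ℓ : ℤ) - 1) (ℓ + 1)) = δ (-(ℓ : ℤ) + 1) (ℓ - 1) := by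
    rw [hU₃, hU₁_prev, inner_δ_δ, inner_δ_δ]
    simp
  refine ⟨?_, fun x j => ?_, fun h => ?_⟩
  · rw [hU₃, hU₁c ℓ hℓ, inner_δ_δ, inner_δ_δ]
    simp
  · rw [map_δ_eq_map_δ_succ hWpa hWpb hWma hWmb, Wp.adjoint_apply_map]
  · rw [h, hU₁_prev] at hU₃_prev
    exact δ_ne_δ (by simp) hU₃_prev

theorem perturbed_model_2_same_scattering (ℓ : ℕ) (hℓ : 1 ≤ ℓ)
    (U₀ U₁ U₃ : H ≃ₗᵢ[ℂ] H) (Wp Wm : H →ₗᵢ[ℂ] H)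
    (hU₀ : ∀ (x : ℤ) (j : ℕ), U₀ (δ x j) = δ (x + 1) j)
    (hU₁a : ∀ (x : ℤ) (j : ℕ), x ≠ -(j : ℤ) - 1 → x ≠ -(j : ℤ) →
      U₁ (δ x j) = δ (x + 1) j)
    (hU₁b : ∀ j : ℕ, U₁ (δ (-(j : ℤ) - 1) j) = δ (-(j : ℤ)) (j + 1))
    (hU₁c : ∀ j : ℕ, 1 ≤ j → U₁ (δ (-(j : ℤ)) j) = δ (-(j : ℤ) + 1) (j - 1))
    (hU₁d : U₁ (δ 0 0) = δ 1 0)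
    (hU₃ : ∀ f : H, U₃ f = U₁ f
      - (inner ℂ (δ (-(ℓ : ℤ) - 1) (ℓ + 1)) f : ℂ) • δ (-(ℓ : ℤ)) ℓ
      - (inner ℂ (δ (-(ℓ : ℤ)) ℓ) f : ℂ) • δ (-(ℓ : ℤ) + 1) (ℓ - 1)
      + (inner ℂ (δ (-(ℓ : ℤ) - 1) (ℓ + 1)) f : ℂ) • δ (-(ℓ : ℤ) + 1) (ℓ - 1)
      + (inner ℂ (δ (-(ℓ : ℤ)) ℓ) f : ℂ) • δ (-(ℓ : ℤ)) ℓ)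
    -- W₊(U₃,U₀):
    (hWpa : ∀ (x : ℤ) (j : ℕ), -(j : ℤ) + 1 ≤ x → Wp (δ x j) = δ x j)
    (hWpb : ∀ (x : ℤ) (j : ℕ), 1 ≤ j → x ≤ -(j : ℤ) → Wp (δ x j) = δ x (j - 1))
    (hWpc : ∀ x : ℤ, -(ℓ : ℤ) + 1 ≤ x → x ≤ 0 → Wp (δ x 0) = δ x (-x).toNat)
    (hWpd : ∀ x : ℤ, x ≤ -(ℓ : ℤ) → Wp (δ x 0) = δ (x - 1) (-x + 1).toNat)
    -- W₋(U₃,U₀):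
    (hWma : ∀ (x : ℤ) (j : ℕ), x ≤ -(j : ℤ) - 1 → Wm (δ x j) = δ x j)
    (hWmb : ∀ (x : ℤ) (j : ℕ), -(j : ℤ) ≤ x → Wm (δ x j) = δ x (j + 1)) :
    U₃ (δ (-(ℓ : ℤ)) ℓ) = δ (-(ℓ : ℤ)) ℓ ∧
    (∀ (x : ℤ) (j : ℕ),
      ContinuousLinearMap.adjoint Wp.toContinuousLinearMap (Wm (δ x j)) = δ x (j + 1)) ∧
    U₃ ≠ U₁ :=
  perturbed_model_2_same_scattering_general ℓ hℓ U₁ U₃ Wp Wm hU₁c hU₃ hWpa hWpb hWma hWmb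
end
end
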